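/- arXiv:2509.00342 — 4 statements merged into one kernel-verified Lean document; each statement's English description precedes it below -/
import Mathlib

section
/- Fix a, r ∈ ℝ with a > 0 and λ > 0, and let f(β) = (a/2)(β − r)² + λ·min(|β|, |β−1|). If r > 1/2, then the minimizer of f over the region {β : |β−1| ≤ |β|} = [1/2, ∞) is β* = 1 + sign(r−1)·max(0, |r−1| − λ/a), provided this value is ≥ 1/2. -/
lemma min_abs_eq_right_aux (x : ℝ) (hx : 1/2 ≤ x) : min |x| |x - 1| = |x - 1| := by
  apply min_eq_right
  rcases le_or_gt 1 x with h | h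
  · rw [abs_of_nonneg (by linarith : (0:ℝ) ≤ x), abs_of_nonneg (by linarith : (0:ℝ) ≤ x - 1)]
    linarith
  · rw [abs_of_nonneg (by linarith : (0:ℝ) ≤ x), abs_of_nonpos (by linarith : x - 1 ≤ 0)]
    linarith

set_option maxHeartbeats 1000000 in
theorem min_penalty_soft_threshold_toward_one (a r l : ℝ) (ha : 0 < a) (hl : 0 < l)
    (hr : r > 1 / 2) (hthr : 1 + Real.sign (r - 1) * max 0 (|r - 1| - l / a) ≥ 1 / 2) :
    IsMinOn (fun β : ℝ => a / 2 * (β - r) ^ 2 + l * min |β| |β - 1|)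
      {β : ℝ | |β - 1| ≤ |β|} (1 + Real.sign (r - 1) * max 0 (|r - 1| - l / a)) := by
  intro β hβ
  simp only [Set.mem_setOf_eq] at hβ ⊢
  have hβh : 1/2 ≤ β := by
    rcases abs_cases β with ⟨h1,h2⟩|⟨h1,h2⟩ <;> rcases abs_cases (β-1) with ⟨h3,h4⟩|⟨h3,h4⟩ <;>
      linarith
  set c := l / a with hcdef
  have hca : a * c = l := mul_div_cancel₀ l ha.ne'
  have hc0 : 0 < c := div_pos hl ha
  set t := 1 + Real.sign (r - 1) * max 0 (|r - 1| - l / a) with ht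
  have hth : 1/2 ≤ t := hthr
  rw [min_abs_eq_right_aux β hβh, min_abs_eq_right_aux t hth]
  rcases lt_trichotomy r 1 with hc | hc | hc
  · rw [Real.sign_of_neg (by linarith : r - 1 < 0), abs_of_neg (by linarith : r - 1 < 0)] at ht
    rcases le_or_gt (-(r-1) - l/a) 0 with hm | hm
    · have ht1 : t = 1 := by rw [ht, max_eq_left hm]; ring
      rw [ht1]
      have h0 : |(1:ℝ) - 1| = 0 := by norm_num
      rw [h0]
      have hla : a * (1 - r) ≤ l := by nlinarith
      rcases abs_cases (β - 1) with ⟨h1,h2⟩|⟨h1,h2⟩ <;> rw [h1]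
      · nlinarith [mul_nonneg h2 (by linarith : (0:ℝ) ≤ β + 1 - 2*r), mul_nonneg hl.le h2]
      · nlinarith [sq_nonneg (β - 1), mul_nonneg (mul_nonneg ha.le (by linarith : (0:ℝ) ≤ 1 - β)) (by linarith : (0:ℝ) ≤ 1 - β)]
    · have ht1 : t = r + c := by rw [ht, max_eq_right hm.le]; ring
      have htlt : t < 1 := by rw [ht1]; linarith
      rw [ht1, abs_of_neg (by linarith : r + c - 1 < 0)]
      rcases abs_cases (β - 1) with ⟨h1,h2⟩|⟨h1,h2⟩ <;> rw [h1]
      · nlinarith [sq_nonneg (β - (r + c)), mul_nonneg hl.le h2]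
      · nlinarith [sq_nonneg (β - (r + c))]
  · subst hc
    simp only [sub_self, Real.sign_zero, zero_mul, add_zero] at ht ⊢
    have ht1 : t = 1 := ht
    rw [ht1]
    have h0 : |(1:ℝ) - 1| = 0 := by norm_num
    rw [h0]
    nlinarith [abs_nonneg (β - 1), sq_nonneg (β - 1)]
  · rw [Real.sign_of_pos (by linarith : 0 < r - 1), abs_of_pos (by linarith : 0 < r - 1)] at ht
    rcases le_or_gt (r - 1 - l/a) 0 with hm | hm
    · have ht1 : t = 1 := by rw [ht, max_eq_left hm]; ring
      rw [ht1]
      have h0 : |(1:ℝ) - 1| = 0 := by norm_num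
      rw [h0]
      have hla : a * (r - 1) ≤ l := by nlinarith
      rcases abs_cases (β - 1) with ⟨h1,h2⟩|⟨h1,h2⟩ <;> rw [h1]
      · nlinarith [sq_nonneg (β - 1), mul_nonneg (mul_nonneg ha.le h2) h2]
      · nlinarith [mul_nonneg ha.le (mul_nonneg (by linarith : (0:ℝ) ≤ 1 - β) (by linarith : (0:ℝ) ≤ 2*r - β - 1)), mul_nonneg hl.le (by linarith : (0:ℝ) ≤ 1 - β)]
    · have ht1 : t = r - c := by rw [ht, max_eq_right hm.le]; ring
      have htgt : 1 < t := by rw [ht1]; linarith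
      rw [ht1, abs_of_pos (by linarith : 0 < r - c - 1)]
      rcases abs_cases (β - 1) with ⟨h1,h2⟩|⟨h1,h2⟩ <;> rw [h1]
      · nlinarith [sq_nonneg (β - (r - c))]
      · nlinarith [sq_nonneg (β - (r - c)), mul_nonneg hl.le (by linarith : (0:ℝ) ≤ 1 - β)]
end

section
/- Let a > 0, r ∈ ℝ, λ ≥ 0, and f(β) = (a/2)(β−r)² + λ|β(β−1)|. Every global minimizer β* of f over ℝ satisfies: if r ≤ 0 then β* ∈ [r, 0]; if r ≥ 1 then β* ∈ [1, r]; and if 0 ≤ r ≤ 1 then β* ∈ [0, 1]. -/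
/-!
Compared with any point `c` whose penalty is no larger, a minimizer `b` of
`a/2 (β - r)² + λ·g β` must be at least as close to `r` as `c` is. The product penalty
`|β(β - 1)|` vanishes at `0` and `1` and grows away from `[0, 1]`, so a minimizer outside the
claimed interval could be replaced by `0`, `1` or `r` itself, which is strictly closer to `r`
with no larger penalty.
-/

open Set

theorem sq_sub_le_of_isMinOn_of_le {a r l b c : ℝ} {g : ℝ → ℝ} (ha : 0 < a) (hl : 0 ≤ l)
    (hb : IsMinOn (fun β => a / 2 * (β - r) ^ 2 + l * g β) univ b) (hgc : g c ≤ g b) :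
    (b - r) ^ 2 ≤ (c - r) ^ 2 := by
  have hmin : a / 2 * (b - r) ^ 2 + l * g b ≤ a / 2 * (c - r) ^ 2 + l * g c :=
    hb (mem_univ c)
  nlinarith [mul_le_mul_of_nonneg_left hgc hl]

theorem abs_mul_sub_one_antitoneOn : AntitoneOn (fun β : ℝ => |β * (β - 1)|) (Iic 0) := by
  intro x hx y hy hxy
  simp only [mem_Iic] at hx hy ⊢
  rw [abs_of_nonneg (by nlinarith), abs_of_nonneg (by nlinarith)]
  nlinarith

theorem abs_mul_sub_one_monotoneOn : MonotoneOn (fun β : ℝ => |β * (β - 1)|) (Ici 1) := by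
  intro x hx y hy hxy
  simp only [mem_Ici] at hx hy ⊢
  rw [abs_of_nonneg (by nlinarith), abs_of_nonneg (by nlinarith)]
  nlinarith

theorem product_penalty_minimizer_location (a r l : ℝ) (ha : 0 < a) (hl : 0 ≤ l)
    (b : ℝ)
    (hb : IsMinOn (fun β : ℝ => a / 2 * (β - r) ^ 2 + l * |β * (β - 1)|) Set.univ b) :
    (r ≤ 0 → b ∈ Set.Icc r 0) ∧ (r ≥ 1 → b ∈ Set.Icc 1 r) ∧
    (0 ≤ r ∧ r ≤ 1 → b ∈ Set.Icc (0 : ℝ) 1) := by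
  have closer := fun c => sq_sub_le_of_isMinOn_of_le (c := c) ha hl hb
  have at_zero := closer 0 (by simpa using abs_nonneg (b * (b - 1)))
  have at_one := closer 1 (by simpa using abs_nonneg (b * (b - 1)))
  refine ⟨fun hr => ⟨?_, ?_⟩, fun hr => ⟨?_, ?_⟩, fun ⟨hr0, hr1⟩ => ⟨?_, ?_⟩⟩ <;> by_contra! h
  · nlinarith [closer r (abs_mul_sub_one_antitoneOn (by simp [h.le.trans hr]) hr h.le)]
  · nlinarith
  · nlinarith
  · nlinarith [closer r (abs_mul_sub_one_monotoneOn hr (by simp [hr.trans h.le]) h.le)]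
  · nlinarith
  · nlinarith
end

section
/- Let a > 0, r ∈ ℝ with r ≤ 0, λ ≥ 0, and f(β) = (a/2)(β−r)² + λ|β(β−1)|. Then the global minimizer of f over (−∞, 0] is β* = min(0, (ar + λ)/(a + 2λ)), and this is in fact a global minimizer of f over all of ℝ. -/
/-!
On `β ≤ 0` the penalty `|β(β-1)|` equals `β² - β`, so `f` is a convex quadratic there with vertex
`(ar + l)/(a + 2l)`; its minimum over the half-line is at the vertex clipped to `0`. On `β ≥ 0` we have
`(β - r)² ≥ r²` because `r ≤ 0`, so `f β ≥ f 0`, and the minimizer over `(-∞, 0]` is global.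
-/

open Set

noncomputable def productPenaltyObjective (a r l β : ℝ) : ℝ :=
  a / 2 * (β - r) ^ 2 + l * |β * (β - 1)|

theorem isMinOn_Iic_min_vertex {c m d : ℝ} (b : ℝ) (hc : 0 ≤ c) :
    IsMinOn (fun x => c * (x - m) ^ 2 + d) (Iic b) (min b m) := by
  refine isMinOn_iff.mpr fun x (hx : x ≤ b) => ?_
  rcases le_total m b with hmb | hbm
  · rw [min_eq_right hmb]
    nlinarith [mul_nonneg hc (sq_nonneg (x - m))]
  · rw [min_eq_left hbm]
    have hsq : (b - m) ^ 2 ≤ (x - m) ^ 2 := by nlinarith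
    nlinarith [mul_le_mul_of_nonneg_left hsq hc]

theorem IsMinOn.univ_of_Iic {α β : Type*} [LinearOrder α] [Preorder β] {f : α → β} {b x : α}
    (hmin : IsMinOn f (Iic b) x) (hright : ∀ y, b ≤ y → f b ≤ f y) : IsMinOn f univ x := by
  refine isMinOn_univ_iff.mpr fun y => ?_
  rcases le_total y b with hyb | hby
  · exact isMinOn_iff.mp hmin y hyb
  · exact (isMinOn_iff.mp hmin b le_rfl).trans (hright y hby)

theorem productPenaltyObjective_eq_vertex_form_of_nonpos {a r l β : ℝ} (hD : a + 2 * l ≠ 0)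
    (hβ : β ≤ 0) :
    productPenaltyObjective a r l β =
      (a / 2 + l) * (β - (a * r + l) / (a + 2 * l)) ^ 2 +
        (a / 2 * r ^ 2 - (a / 2 + l) * ((a * r + l) / (a + 2 * l)) ^ 2) := by
  have habs : |β * (β - 1)| = β * (β - 1) := abs_of_nonneg (by nlinarith)
  rw [productPenaltyObjective, habs]
  field_simp
  ring

theorem productPenaltyObjective_zero_le {a r l β : ℝ} (ha : 0 ≤ a) (hr : r ≤ 0) (hl : 0 ≤ l)
    (hβ : 0 ≤ β) : productPenaltyObjective a r l 0 ≤ productPenaltyObjective a r l β := by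
  have hsq : (0 - r) ^ 2 ≤ (β - r) ^ 2 := by nlinarith
  simp only [productPenaltyObjective, zero_mul, abs_zero, mul_zero, add_zero]
  nlinarith [mul_le_mul_of_nonneg_left hsq ha, mul_nonneg hl (abs_nonneg (β * (β - 1)))]

theorem product_penalty_global_min_left (a r l : ℝ) (ha : 0 < a) (hr : r ≤ 0) (hl : 0 ≤ l) :
    IsMinOn (fun β : ℝ => a / 2 * (β - r) ^ 2 + l * |β * (β - 1)|)
      (Set.Iic 0) (min 0 ((a * r + l) / (a + 2 * l))) ∧
    IsMinOn (fun β : ℝ => a / 2 * (β - r) ^ 2 + l * |β * (β - 1)|)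
      Set.univ (min 0 ((a * r + l) / (a + 2 * l))) := by
  have hD : a + 2 * l ≠ 0 := by positivity
  have hleft : IsMinOn (productPenaltyObjective a r l) (Iic 0)
      (min 0 ((a * r + l) / (a + 2 * l))) := by
    have hquad := isMinOn_Iic_min_vertex (m := (a * r + l) / (a + 2 * l))
      (d := a / 2 * r ^ 2 - (a / 2 + l) * ((a * r + l) / (a + 2 * l)) ^ 2) 0
      (by positivity : 0 ≤ a / 2 + l)
    refine isMinOn_iff.mpr fun β (hβ : β ≤ 0) => ?_
    rw [productPenaltyObjective_eq_vertex_form_of_nonpos hD hβ,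
      productPenaltyObjective_eq_vertex_form_of_nonpos hD (min_le_left _ _)]
    exact isMinOn_iff.mp hquad β hβ
  exact ⟨hleft, hleft.univ_of_Iic fun β hβ => productPenaltyObjective_zero_le ha.le hr hl hβ⟩
end

section
/- Let a > 0, r ∈ ℝ with r ≥ 1, λ ≥ 0, and f(β) = (a/2)(β−r)² + λ|β(β−1)|. Then the global minimizer of f over [1, ∞) is β* = max(1, (ar + λ)/(a + 2λ)), and it is a global minimizer of f over ℝ. -/
theorem product_penalty_global_min_right (a r l : ℝ) (ha : 0 < a) (hr : r ≥ 1) (hl : 0 ≤ l) :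
    IsMinOn (fun β : ℝ => a / 2 * (β - r) ^ 2 + l * |β * (β - 1)|)
      (Set.Ici 1) (max 1 ((a * r + l) / (a + 2 * l))) ∧
    IsMinOn (fun β : ℝ => a / 2 * (β - r) ^ 2 + l * |β * (β - 1)|)
      Set.univ (max 1 ((a * r + l) / (a + 2 * l))) := by
  set b0 := (a * r + l) / (a + 2 * l) with hb0def
  set m := max 1 b0 with hmdef
  have hden : 0 < a + 2 * l := by linarith
  have hb0 : (a + 2 * l) * b0 = a * r + l := by
    rw [hb0def]; field_simp
  have hm1 : (1 : ℝ) ≤ m := le_max_left _ _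
  have hmabs : |m * (m - 1)| = m * (m - 1) :=
    abs_of_nonneg (mul_nonneg (by linarith) (by linarith))
  have keyR : ∀ β : ℝ, 1 ≤ β →
      a / 2 * (m - r) ^ 2 + l * |m * (m - 1)| ≤ a / 2 * (β - r) ^ 2 + l * |β * (β - 1)| := by
    intro β hβ
    rw [hmabs, abs_of_nonneg (mul_nonneg (by linarith) (by linarith))]
    rcases le_total b0 1 with hc | hc
    · have hm' : m = 1 := max_eq_left hc
      have h1 : a * r + l ≤ a + 2 * l := by
        nlinarith [mul_le_of_le_one_right hden.le hc]
      rw [hm']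
      nlinarith [mul_nonneg (by linarith : (0:ℝ) ≤ β - 1)
        (by nlinarith : (0:ℝ) ≤ (a / 2 + l) * (β + 1) - (a * r + l))]
    · have hm' : m = b0 := max_eq_right hc
      rw [hm']
      nlinarith [mul_nonneg (by linarith : (0:ℝ) ≤ a / 2 + l) (sq_nonneg (β - b0)),
        sq_nonneg (β - b0), hb0, mul_pos hden hden]
  have key : ∀ β : ℝ,
      a / 2 * (m - r) ^ 2 + l * |m * (m - 1)| ≤ a / 2 * (β - r) ^ 2 + l * |β * (β - 1)| := by
    intro β
    rcases le_total 1 β with hβ | hβ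
    · exact keyR β hβ
    · have h1 := keyR 1 le_rfl
      have h2 : a / 2 * ((1:ℝ) - r) ^ 2 + l * |(1:ℝ) * (1 - 1)|
          ≤ a / 2 * (β - r) ^ 2 + l * |β * (β - 1)| := by
        have : (0:ℝ) ≤ l * |β * (β - 1)| := mul_nonneg hl (abs_nonneg _)
        have hsq : ((1:ℝ) - r) ^ 2 ≤ (β - r) ^ 2 := by
          nlinarith [mul_nonneg (by linarith : (0:ℝ) ≤ 1 - β) (by linarith : (0:ℝ) ≤ 2 * r - 1 - β)]
        simp only [sub_self, mul_zero, abs_zero, one_mul]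
        nlinarith
      exact le_trans h1 h2
  exact ⟨fun β _ => key β, fun β _ => key β⟩
end
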